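/- arXiv:2405.08296 — 5 statements merged into one kernel-verified Lean document; each statement's English description precedes it below -/
import Mathlib

section
/- (Reflection inequality for signed distance) Let ψ be a norm on ℝ^N compatible with a unit vector ν (i.e. ψ(x) = ψ(x − 2(x·ν)ν) for all x), let H = {x : x·ν ≤ s} be a half-space with reflection Ψ across ∂H, and suppose F ⊆ ℝ^N satisfies Ψ(F) ∩ H ⊆ F ∩ H. Then for every x ∈ H, sd^ψ_F(x) ≤ sd^ψ_F(Ψ(x)), where sd^ψ_F is the signed ψ-distance to F (negative inside F, positive outside). -/
/-!
A seminorm `p` invariant under the reflection across `ν⊥` is, along every line in direction `ν`,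
an even convex function of the `ν`-coordinate, hence nondecreasing in its absolute value. So
reflecting one of two points of `H` across `∂H` can only increase their `p`-distance, while
`Ψ` preserves `p`-distances. Every point of `F` outside `H` reflects to a point of `F` inside `H`,
which gives `dist(x, F) ≤ dist(Ψ x, F)` for `x ∈ H`; the same argument for `Fᶜ` and the opposite
half-space gives `dist(Ψ x, Fᶜ) ≤ dist(x, Fᶜ)`.
-/

open Real

noncomputable section
open Classical

/-- ψ-distance from a point to a set: inf of ψ(x − y) over y ∈ A. -/
def distPsi {N : ℕ} (ψ : EuclideanSpace ℝ (Fin N) → ℝ)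
    (A : Set (EuclideanSpace ℝ (Fin N))) (x : EuclideanSpace ℝ (Fin N)) : ℝ :=
  sInf ((fun y => ψ (x - y)) '' A)

/-- Signed ψ-distance to a set F: negative inside F, positive outside. -/
def sdPsi {N : ℕ} (ψ : EuclideanSpace ℝ (Fin N) → ℝ)
    (F : Set (EuclideanSpace ℝ (Fin N))) (x : EuclideanSpace ℝ (Fin N)) : ℝ :=
  if x ∈ F then -(distPsi ψ Fᶜ x) else distPsi ψ F x

open Set

theorem ConvexOn.le_of_abs_le_of_even {f : ℝ → ℝ} (hf : ConvexOn ℝ univ f)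
    (heven : ∀ t, f (-t) = f t) {a b : ℝ} (hab : |a| ≤ |b|) : f a ≤ f b := by
  have hfb : f |b| = f b := by
    rcases abs_choice b with h | h <;> simp [h, heven]
  have hmem : a ∈ segment ℝ (-|b|) |b| := by
    rw [segment_eq_Icc (by simp)]
    exact abs_le.mp hab
  calc f a ≤ max (f (-|b|)) (f |b|) := hf.le_on_segment trivial trivial hmem
    _ = f b := by rw [heven, max_self, hfb]

theorem Seminorm.convexOn_comp_add_smul {E : Type*} [AddCommGroup E] [Module ℝ E] (p : Seminorm ℝ E) (w ν : E) :
    ConvexOn ℝ univ fun r : ℝ => p (w + r • ν) := by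
  have h := p.convexOn.comp_affineMap (AffineMap.lineMap w (w + ν))
  rw [preimage_univ] at h
  refine h.congr fun r _ => ?_
  simp only [Function.comp_apply, AffineMap.lineMap_apply_module]
  congr 1
  module

section InnerProductSpace

variable {E : Type*} [NormedAddCommGroup E] [InnerProductSpace ℝ E]

theorem Seminorm.le_add_smul_of_abs_inner_le (p : Seminorm ℝ E) {ν : E} (hν : ‖ν‖ = 1)
    (hp : ∀ x, p (x - (2 * inner ℝ x ν) • ν) = p x) {u : E} {t : ℝ}
    (h : |inner ℝ u ν| ≤ |inner ℝ u ν + t|) : p u ≤ p (u + t • ν) := by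
  have hνν : inner ℝ ν ν = (1 : ℝ) := inner_self_eq_one_of_norm_eq_one hν
  set a : ℝ := inner ℝ u ν
  set w := u - a • ν
  have hw : inner ℝ w ν = (0 : ℝ) := by
    simp only [w, inner_sub_left, real_inner_smul_left, hνν, mul_one]
    exact sub_self a
  have heven : ∀ r : ℝ, p (w + (-r) • ν) = p (w + r • ν) := fun r => by
    have hinner : inner ℝ (w + r • ν) ν = r := by
      simp only [inner_add_left, real_inner_smul_left, hνν, hw, mul_one, zero_add]
    rw [← hp (w + r • ν), hinner]
    congr 1
    module
  have hu : u = w + a • ν := by simp [w]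
  have hut : u + t • ν = w + (a + t) • ν := by rw [hu, add_smul, add_assoc]
  rw [hut, hu]
  exact (p.convexOn_comp_add_smul w ν).le_of_abs_le_of_even heven h

/-- The reflection `Ψ` across the hyperplane `{x | ⟪x, ν⟫ = s}` (for a unit vector `ν`). -/
def halfSpaceReflection (ν : E) (s : ℝ) (x : E) : E :=
  x + (2 * (s - inner ℝ x ν)) • ν

variable {ν : E} {s : ℝ}

theorem halfSpaceReflection_neg : halfSpaceReflection (-ν) (-s) = halfSpaceReflection ν s := by
  ext x
  simp only [halfSpaceReflection, inner_neg_right, smul_neg, ← neg_smul]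
  congr 2
  ring

theorem halfSpaceReflection_sub_halfSpaceReflection (x y : E) :
    halfSpaceReflection ν s x - halfSpaceReflection ν s y
      = (x - y) - (2 * inner ℝ (x - y) ν) • ν := by
  simp only [halfSpaceReflection, inner_sub_left]
  module

theorem inner_halfSpaceReflection (hν : ‖ν‖ = 1) (x : E) :
    inner ℝ (halfSpaceReflection ν s x) ν = 2 * s - inner ℝ x ν := by
  simp only [halfSpaceReflection, inner_add_left, real_inner_smul_left,
    inner_self_eq_one_of_norm_eq_one hν]
  ring

theorem halfSpaceReflection_involutive (hν : ‖ν‖ = 1) :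
    Function.Involutive (halfSpaceReflection ν s) := fun x => by
  rw [halfSpaceReflection, inner_halfSpaceReflection hν, halfSpaceReflection]
  module

namespace Seminorm

variable (p : Seminorm ℝ E) (hν : ‖ν‖ = 1) (hp : ∀ x, p (x - (2 * inner ℝ x ν) • ν) = p x)
include hp

theorem map_halfSpaceReflection_sub (x y : E) :
    p (halfSpaceReflection ν s x - halfSpaceReflection ν s y) = p (x - y) := by
  rw [halfSpaceReflection_sub_halfSpaceReflection, hp]

include hν in
theorem le_halfSpaceReflection_sub {x y : E} (hx : inner ℝ x ν ≤ s) (hy : inner ℝ y ν ≤ s) :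
    p (x - y) ≤ p (halfSpaceReflection ν s x - y) := by
  have hΨ : halfSpaceReflection ν s x - y = (x - y) + (2 * (s - inner ℝ x ν)) • ν := by
    rw [halfSpaceReflection]; abel
  rw [hΨ]
  refine p.le_add_smul_of_abs_inner_le hν hp (abs_le_abs ?_ ?_) <;>
    rw [inner_sub_left] <;> linarith

end Seminorm

end InnerProductSpace

section SignedDistance

variable {N : ℕ} (p : Seminorm ℝ (EuclideanSpace ℝ (Fin N)))

theorem distPsi_nonneg (A : Set (EuclideanSpace ℝ (Fin N))) (x : EuclideanSpace ℝ (Fin N)) :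
    0 ≤ distPsi p A x :=
  Real.sInf_nonneg (by rintro _ ⟨y, -, rfl⟩; exact apply_nonneg p _)

theorem distPsi_le_of_forall_exists {A : Set (EuclideanSpace ℝ (Fin N))}
    {x x' : EuclideanSpace ℝ (Fin N)} (h : ∀ y ∈ A, ∃ z ∈ A, p (x - z) ≤ p (x' - y)) :
    distPsi p A x ≤ distPsi p A x' := by
  rcases A.eq_empty_or_nonempty with rfl | hA
  · simp [distPsi]
  refine le_csInf (hA.image _) ?_
  rintro _ ⟨y, hy, rfl⟩
  obtain ⟨z, hz, hle⟩ := h y hy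
  have hbdd : BddBelow ((fun y => p (x - y)) '' A) :=
    ⟨0, by rintro _ ⟨_, -, rfl⟩; exact apply_nonneg p _⟩
  exact (csInf_le hbdd ⟨z, hz, rfl⟩).trans hle

variable {ν : EuclideanSpace ℝ (Fin N)} {s : ℝ} (hν : ‖ν‖ = 1)
  (hp : ∀ x, p (x - (2 * inner ℝ x ν) • ν) = p x) {F : Set (EuclideanSpace ℝ (Fin N))}
include hν hp

theorem distPsi_le_distPsi_halfSpaceReflection
    (hF : ∀ x, inner ℝ x ν ≤ s → halfSpaceReflection ν s x ∈ F → x ∈ F)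
    {x : EuclideanSpace ℝ (Fin N)} (hx : inner ℝ x ν ≤ s) :
    distPsi p F x ≤ distPsi p F (halfSpaceReflection ν s x) := by
  have hΨΨ := halfSpaceReflection_involutive (s := s) hν
  refine distPsi_le_of_forall_exists p fun y hy => ?_
  by_cases hyH : inner ℝ y ν ≤ s
  · exact ⟨y, hy, p.le_halfSpaceReflection_sub hν hp hx hyH⟩
  have hΨyH : inner ℝ (halfSpaceReflection ν s y) ν ≤ s := by
    rw [inner_halfSpaceReflection hν]; linarith
  refine ⟨halfSpaceReflection ν s y, hF _ hΨyH (by rwa [hΨΨ]), ?_⟩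
  rw [← p.map_halfSpaceReflection_sub hp, hΨΨ]

theorem distPsi_compl_halfSpaceReflection_le
    (hF : ∀ x, inner ℝ x ν ≤ s → halfSpaceReflection ν s x ∈ F → x ∈ F)
    {x : EuclideanSpace ℝ (Fin N)} (hx : inner ℝ x ν ≤ s) :
    distPsi p Fᶜ (halfSpaceReflection ν s x) ≤ distPsi p Fᶜ x := by
  have hΨΨ := halfSpaceReflection_involutive (s := s) hν
  have hν' : ‖-ν‖ = 1 := by rwa [norm_neg]
  have hp' : ∀ x, p (x - (2 * inner ℝ x (-ν)) • (-ν)) = p x := fun x => by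
    simpa only [inner_neg_right, smul_neg, neg_smul, mul_neg, neg_neg] using hp x
  have hFc : ∀ y, inner ℝ y (-ν) ≤ -s →
      halfSpaceReflection (-ν) (-s) y ∈ Fᶜ → y ∈ Fᶜ := by
    intro y hy hΨy hyF
    rw [inner_neg_right, neg_le_neg_iff] at hy
    rw [halfSpaceReflection_neg] at hΨy
    refine hΨy (hF _ ?_ (by rwa [hΨΨ]))
    rw [inner_halfSpaceReflection hν]; linarith
  have hΨx : inner ℝ (halfSpaceReflection ν s x) (-ν) ≤ -s := by
    rw [inner_neg_right, inner_halfSpaceReflection hν]; linarith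
  simpa only [halfSpaceReflection_neg, hΨΨ x] using
    distPsi_le_distPsi_halfSpaceReflection p hν' hp' hFc hΨx

theorem sdPsi_le_sdPsi_halfSpaceReflection
    (hF : ∀ x, inner ℝ x ν ≤ s → halfSpaceReflection ν s x ∈ F → x ∈ F)
    {x : EuclideanSpace ℝ (Fin N)} (hx : inner ℝ x ν ≤ s) :
    sdPsi p F x ≤ sdPsi p F (halfSpaceReflection ν s x) := by
  unfold sdPsi
  split_ifs with hxF hΨxF hΨxF
  · exact neg_le_neg (distPsi_compl_halfSpaceReflection_le p hν hp hF hx)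
  · linarith [distPsi_nonneg p Fᶜ x, distPsi_nonneg p F (halfSpaceReflection ν s x)]
  · exact absurd (hF x hx hΨxF) hxF
  · exact distPsi_le_distPsi_halfSpaceReflection p hν hp hF hx

end SignedDistance

theorem reflection_signed_distance_general {N : ℕ}
    (ψ : EuclideanSpace ℝ (Fin N) → ℝ)
    (hψ_add : ∀ x y, ψ (x + y) ≤ ψ x + ψ y)
    (hψ_smul : ∀ (c : ℝ) x, ψ (c • x) = |c| * ψ x)
    (ν : EuclideanSpace ℝ (Fin N)) (hν : ‖ν‖ = 1)
    (hcompat : ∀ x, ψ (x - (2 * (inner ℝ x ν : ℝ)) • ν) = ψ x)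
    (s : ℝ) (F : Set (EuclideanSpace ℝ (Fin N)))
    (Ψ : EuclideanSpace ℝ (Fin N) → EuclideanSpace ℝ (Fin N))
    (hΨ : ∀ x, Ψ x = x + (2 * (s - (inner ℝ x ν : ℝ))) • ν)
    (hrefl : ∀ x, (inner ℝ x ν : ℝ) ≤ s → Ψ x ∈ F → x ∈ F) :
    ∀ x, (inner ℝ x ν : ℝ) ≤ s → sdPsi ψ F x ≤ sdPsi ψ F (Ψ x) := by
  obtain rfl : Ψ = halfSpaceReflection ν s := funext hΨ
  let p : Seminorm ℝ (EuclideanSpace ℝ (Fin N)) :=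
    Seminorm.of ψ hψ_add (by simpa only [Real.norm_eq_abs] using hψ_smul)
  exact fun x hx => sdPsi_le_sdPsi_halfSpaceReflection p hν hcompat hrefl hx

/-- Reflection inequality for signed distance: if ψ is a norm compatible with
the unit vector ν, H = {x : x·ν ≤ s}, Ψ is the reflection across ∂H and Ψ(F) ∩ H ⊆ F ∩ H,
then sd^ψ_F(x) ≤ sd^ψ_F(Ψ(x)) for every x ∈ H. -/
theorem reflection_signed_distance {N : ℕ}
    (ψ : EuclideanSpace ℝ (Fin N) → ℝ)
    (hψ_add : ∀ x y, ψ (x + y) ≤ ψ x + ψ y)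
    (hψ_smul : ∀ (c : ℝ) x, ψ (c • x) = |c| * ψ x)
    (hψ_pos : ∀ x, ψ x = 0 ↔ x = 0)
    (ν : EuclideanSpace ℝ (Fin N)) (hν : ‖ν‖ = 1)
    (hcompat : ∀ x, ψ (x - (2 * (inner ℝ x ν : ℝ)) • ν) = ψ x)
    (s : ℝ) (F : Set (EuclideanSpace ℝ (Fin N)))
    (Ψ : EuclideanSpace ℝ (Fin N) → EuclideanSpace ℝ (Fin N))
    (hΨ : ∀ x, Ψ x = x + (2 * (s - (inner ℝ x ν : ℝ))) • ν)
    (hrefl : ∀ x, (inner ℝ x ν : ℝ) ≤ s → Ψ x ∈ F → x ∈ F) :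
    ∀ x, (inner ℝ x ν : ℝ) ≤ s → sdPsi ψ F x ≤ sdPsi ψ F (Ψ x) :=
  reflection_signed_distance_general ψ hψ_add hψ_smul ν hν hcompat s F Ψ hΨ hrefl
end
end

section
/- Let P ⊆ S^{N−1} be a finite root system (i.e. −ν ∈ P and the reflection x ↦ x − 2(x·ν)ν maps P onto P, for each ν ∈ P). Define g(x) = (1/2)Σ_{ν∈P} |x·ν|. Then for every ν₀ ∈ P, every y with y·ν₀ ≥ 0, and every t ≥ 0, one has g(y + tν₀) − g(y) ≥ t. -/
/-!
Let `σ` be the reflection in `ν₀`. Since `σ` permutes `P`,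
`2 ∑_P |⟪x, ν⟫| = ∑_P (|⟪x, ν⟫| + |⟪x, σ ν⟫|)`, and with `s = ⟪x, ν₀⟫`, `c = ⟪ν, ν₀⟫` the paired
term is `|b + s c| + |b - s c| = 2 max |b| |s c|` where `b = ⟪x, ν⟫ - s c`. Moving `x` from `y` to
`y + t ν₀` leaves `b` fixed and replaces `s ≥ 0` by `s + t`, so every paired term grows, and the
two terms `ν = ±ν₀` grow by exactly `2t` each.
-/

open Finset

lemma abs_add_add_abs_sub (b p : ℝ) : |b + p| + |b - p| = 2 * max |b| |p| := by
  rcases abs_cases b with ⟨hb, _⟩ | ⟨hb, _⟩ <;> rcases abs_cases p with ⟨hp, _⟩ | ⟨hp, _⟩ <;>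
  rcases abs_cases (b + p) with ⟨h1, _⟩ | ⟨h1, _⟩ <;>
  rcases abs_cases (b - p) with ⟨h2, _⟩ | ⟨h2, _⟩ <;>
  rcases max_cases |b| |p| with ⟨h, _⟩ | ⟨h, _⟩ <;> linarith

lemma abs_add_add_abs_sub_le_of_abs_le (b : ℝ) {p q : ℝ} (h : |p| ≤ |q|) :
    |b + p| + |b - p| ≤ |b + q| + |b - q| := by
  rw [abs_add_add_abs_sub, abs_add_add_abs_sub]
  gcongr

section Reflection

variable {E : Type*} [NormedAddCommGroup E] [InnerProductSpace ℝ E]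

def rootReflection (u x : E) : E := x - (2 * inner ℝ x u) • u

variable {u : E}

lemma inner_rootReflection_right (x ν : E) :
    inner ℝ x (rootReflection u ν) = inner ℝ x ν - 2 * inner ℝ ν u * inner ℝ x u := by
  rw [rootReflection, inner_sub_right, real_inner_smul_right, mul_assoc]

lemma rootReflection_neg (x : E) : rootReflection u (-x) = -rootReflection u x := by
  simp only [rootReflection, inner_neg_left]
  module

lemma rootReflection_self (hu : ‖u‖ = 1) : rootReflection u u = -u := by
  rw [rootReflection, real_inner_self_eq_norm_sq, hu]
  module

lemma rootReflection_involutive (hu : ‖u‖ = 1) : Function.Involutive (rootReflection u) := by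
  intro x
  simp only [rootReflection, inner_sub_left, real_inner_smul_left, real_inner_self_eq_norm_sq, hu]
  module

lemma inner_add_smul_left_of_norm_eq_one (hu : ‖u‖ = 1) (y : E) (t : ℝ) :
    inner ℝ (y + t • u) u = inner ℝ y u + t := by
  rw [inner_add_left, real_inner_smul_left, real_inner_self_eq_norm_sq, hu, one_pow, mul_one]

lemma sum_comp_rootReflection {P : Finset E} (hu : ‖u‖ = 1)
    (hP : ∀ ν ∈ P, rootReflection u ν ∈ P) (f : E → ℝ) :
    ∑ ν ∈ P, f (rootReflection u ν) = ∑ ν ∈ P, f ν :=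
  sum_nbij' _ _ hP hP (fun ν _ => rootReflection_involutive hu ν)
    (fun ν _ => rootReflection_involutive hu ν) fun _ _ => rfl

lemma two_mul_sum_abs_inner {P : Finset E} (hu : ‖u‖ = 1)
    (hP : ∀ ν ∈ P, rootReflection u ν ∈ P) (x : E) :
    2 * ∑ ν ∈ P, |inner ℝ x ν| = ∑ ν ∈ P, (|inner ℝ x ν| + |inner ℝ x (rootReflection u ν)|) := by
  rw [sum_add_distrib, sum_comp_rootReflection hu hP (fun ν => |inner ℝ x ν|), two_mul]

lemma abs_inner_add_abs_inner_rootReflection_le (hu : ‖u‖ = 1) {y : E} (hy : 0 ≤ inner ℝ y u)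
    {t : ℝ} (ht : 0 ≤ t) (ν : E) :
    |inner ℝ y ν| + |inner ℝ y (rootReflection u ν)| ≤
      |inner ℝ (y + t • u) ν| + |inner ℝ (y + t • u) (rootReflection u ν)| := by
  have hc : |inner ℝ y u * inner ℝ ν u| ≤ |(inner ℝ y u + t) * inner ℝ ν u| := by
    rw [abs_mul, abs_mul]
    gcongr
    linarith
  have key := abs_add_add_abs_sub_le_of_abs_le (inner ℝ y ν - inner ℝ y u * inner ℝ ν u) hc
  simp only [inner_rootReflection_right, inner_add_smul_left_of_norm_eq_one hu]
  convert key using 3 <;>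
    simp only [inner_add_left, real_inner_smul_left, real_inner_comm u ν] <;> ring

end Reflection

theorem root_system_g_growth_general {N : ℕ}
    (P : Finset (EuclideanSpace ℝ (Fin N)))
    (hunit : ∀ ν ∈ P, ‖ν‖ = 1)
    (hrefl : ∀ ν ∈ P, ∀ p ∈ P, p - (2 * (inner ℝ p ν : ℝ)) • ν ∈ P)
    (g : EuclideanSpace ℝ (Fin N) → ℝ)
    (hg : ∀ x, g x = (1 / 2) * ∑ ν ∈ P, |(inner ℝ x ν : ℝ)|) :
    ∀ ν₀ ∈ P, ∀ y : EuclideanSpace ℝ (Fin N), 0 ≤ (inner ℝ y ν₀ : ℝ) →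
      ∀ t : ℝ, 0 ≤ t → t ≤ g (y + t • ν₀) - g y := by
  intro u hu y hy t ht
  have hu1 := hunit u hu
  have hP : ∀ ν ∈ P, rootReflection u ν ∈ P := hrefl u hu
  set φ : _ → _ → ℝ := fun x ν => |inner ℝ x ν| + |inner ℝ x (rootReflection u ν)|
  have hφ_self (x) : φ x u = 2 * |inner ℝ x u| := by
    simp only [φ, rootReflection_self hu1, inner_neg_right, abs_neg]
    ring
  have hφ_neg (x) : φ x (-u) = 2 * |inner ℝ x u| := by
    simp only [φ, rootReflection_neg, rootReflection_self hu1, neg_neg, inner_neg_right, abs_neg]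
    ring
  have hne : u ≠ -u := fun h =>
    ne_neg_of_mem_unit_sphere ℝ ⟨u, mem_sphere_zero_iff_norm.2 hu1⟩ (Subtype.ext h)
  have hpair : ({u, -u} : Finset _) ⊆ P :=
    insert_subset hu (singleton_subset_iff.2 (rootReflection_self hu1 ▸ hP u hu))
  have hgrowth : 4 * t ≤ ∑ ν ∈ P, (φ (y + t • u) ν - φ y ν) := calc
    4 * t = ∑ ν ∈ {u, -u}, (φ (y + t • u) ν - φ y ν) := by
      rw [sum_pair hne, hφ_self, hφ_self, hφ_neg, hφ_neg,
        inner_add_smul_left_of_norm_eq_one hu1, abs_of_nonneg hy, abs_of_nonneg (by linarith)]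
      ring
    _ ≤ ∑ ν ∈ P, (φ (y + t • u) ν - φ y ν) := sum_le_sum_of_subset_of_nonneg hpair fun ν _ _ =>
      sub_nonneg.2 (abs_inner_add_abs_inner_rootReflection_le hu1 hy ht ν)
  rw [sum_sub_distrib, ← two_mul_sum_abs_inner hu1 hP, ← two_mul_sum_abs_inner hu1 hP] at hgrowth
  rw [hg, hg]
  linarith

/-- for a finite root system P ⊆ S^{N−1} and g(x) = (1/2)Σ_{ν∈P}|x·ν|,
one has g(y + tν₀) − g(y) ≥ t whenever ν₀ ∈ P, y·ν₀ ≥ 0 and t ≥ 0. -/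
theorem root_system_g_growth {N : ℕ}
    (P : Finset (EuclideanSpace ℝ (Fin N)))
    (hunit : ∀ ν ∈ P, ‖ν‖ = 1)
    (hneg : ∀ ν ∈ P, -ν ∈ P)
    (hrefl : ∀ ν ∈ P, ∀ p ∈ P, p - (2 * (inner ℝ p ν : ℝ)) • ν ∈ P)
    (g : EuclideanSpace ℝ (Fin N) → ℝ)
    (hg : ∀ x, g x = (1 / 2) * ∑ ν ∈ P, |(inner ℝ x ν : ℝ)|) :
    ∀ ν₀ ∈ P, ∀ y : EuclideanSpace ℝ (Fin N), 0 ≤ (inner ℝ y ν₀ : ℝ) →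
      ∀ t : ℝ, 0 ≤ t → t ≤ g (y + t • ν₀) - g y :=
  root_system_g_growth_general P hunit hrefl g hg
end

section
/- Let P be a finite root system in S^{N−1}, g(x) = (1/2)Σ_{ν∈P}|x·ν|, ν₀ ∈ P, s > 0, H = {x : x·ν₀ ≤ s}, and Ψ(x) = x + 2(s − x·ν₀)ν₀ the reflection across ∂H. Then g(Ψ(x)) < g(x) for every x with x·ν₀ > s. -/
/-!
Write `x = y + a ν₀` with `y ⊥ ν₀`. Because `P` is stable under the reflection in `ν₀^⊥`,
`c ↦ g (y + c ν₀)` is even; pairing each root `ν` with its mirror image shows that it grows at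
least like `c` for `c ≥ 0`. Hence it is strictly increasing in `|c|`, and `Ψ` replaces the
coefficient `a > s > 0` by `2s - a`, which is smaller in absolute value.
-/

open Finset RealInnerProductSpace

variable {E : Type*} [NormedAddCommGroup E] [InnerProductSpace ℝ E]

/-- The reflection in the hyperplane `v^⊥` when `‖v‖ = 1` (and only then). -/
def reflectAlong (v x : E) : E := x - (2 * ⟪x, v⟫) • v

lemma inner_reflectAlong_left (v x y : E) : ⟪reflectAlong v x, y⟫ = ⟪x, reflectAlong v y⟫ := by
  simp only [reflectAlong, inner_sub_left, inner_sub_right, real_inner_smul_left,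
    real_inner_smul_right, real_inner_comm v y]
  ring

lemma inner_reflectAlong_self {v : E} (hv : ‖v‖ = 1) (x : E) :
    ⟪reflectAlong v x, v⟫ = -⟪x, v⟫ := by
  simp only [reflectAlong, inner_sub_left, real_inner_smul_left, real_inner_self_eq_norm_sq, hv]
  ring

lemma reflectAlong_involutive {v : E} (hv : ‖v‖ = 1) : Function.Involutive (reflectAlong v) := by
  intro x
  rw [reflectAlong, inner_reflectAlong_self hv, reflectAlong]
  module

lemma reflectAlong_self {v : E} (hv : ‖v‖ = 1) : reflectAlong v v = -v := by
  rw [reflectAlong, real_inner_self_eq_norm_sq, hv]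
  module

lemma reflectAlong_add_smul {v y : E} (hv : ‖v‖ = 1) (hy : ⟪y, v⟫ = 0) (c : ℝ) :
    reflectAlong v (y + c • v) = y + (-c) • v := by
  rw [reflectAlong, inner_add_left, real_inner_smul_left, real_inner_self_eq_norm_sq, hv, hy]
  module

lemma sum_comp_reflectAlong {M : Type*} [AddCommMonoid M] {v : E} (hv : ‖v‖ = 1) {P : Finset E}
    (hP : ∀ p ∈ P, reflectAlong v p ∈ P) (f : E → M) :
    ∑ ν ∈ P, f (reflectAlong v ν) = ∑ ν ∈ P, f ν :=
  sum_nbij' _ _ hP hP (fun ν _ ↦ reflectAlong_involutive hv ν)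
    (fun ν _ ↦ reflectAlong_involutive hv ν) fun _ _ ↦ rfl

lemma abs_add_abs_le_abs_add_add_abs_sub {a b d : ℝ} (h : 0 ≤ d * (a - b)) :
    |a| + |b| ≤ |a + d| + |b - d| := by
  rcases abs_cases a with ⟨ha, ha'⟩ | ⟨ha, ha'⟩ <;>
  rcases abs_cases b with ⟨hb, hb'⟩ | ⟨hb, hb'⟩ <;>
  rcases abs_cases (a + d) with ⟨had, had'⟩ | ⟨had, had'⟩ <;>
  rcases abs_cases (b - d) with ⟨hbd, hbd'⟩ | ⟨hbd, hbd'⟩ <;>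
  rw [ha, hb, had, hbd] <;> nlinarith

lemma abs_inner_add_abs_inner_reflectAlong_le {v y : E} (hv : ‖v‖ = 1) (hy : 0 ≤ ⟪y, v⟫)
    {t : ℝ} (ht : 0 ≤ t) (ν : E) :
    |⟪y, ν⟫| + |⟪y, reflectAlong v ν⟫| ≤
      |⟪y + t • v, ν⟫| + |⟪y + t • v, reflectAlong v ν⟫| := by
  have h_shift : ∀ μ, ⟪y + t • v, μ⟫ = ⟪y, μ⟫ + t * ⟪μ, v⟫ := fun μ ↦ by
    rw [inner_add_left, real_inner_smul_left, real_inner_comm v μ]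
  have h_mirror : ⟪y, reflectAlong v ν⟫ = ⟪y, ν⟫ - 2 * ⟪ν, v⟫ * ⟪y, v⟫ := by
    rw [reflectAlong, inner_sub_right, real_inner_smul_right]
  rw [h_shift, h_shift, inner_reflectAlong_self hv, h_mirror, mul_neg, ← sub_eq_add_neg]
  apply abs_add_abs_le_abs_add_add_abs_sub
  nlinarith [mul_nonneg (mul_nonneg ht hy) (sq_nonneg ⟪ν, v⟫)]

variable (P : Finset E)

def absInnerSum (x : E) : ℝ := ∑ ν ∈ P, |⟪x, ν⟫|

variable {P}

lemma absInnerSum_reflectAlong {v : E} (hv : ‖v‖ = 1) (hP : ∀ p ∈ P, reflectAlong v p ∈ P)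
    (x : E) : absInnerSum P (reflectAlong v x) = absInnerSum P x := by
  simp only [absInnerSum, inner_reflectAlong_left]
  exact sum_comp_reflectAlong hv hP fun ν ↦ |⟪x, ν⟫|

lemma absInnerSum_add_two_mul_le {v : E} (hv : ‖v‖ = 1) (hP : ∀ p ∈ P, reflectAlong v p ∈ P)
    (hvP : v ∈ P) {y : E} (hy : 0 ≤ ⟪y, v⟫) {t : ℝ} (ht : 0 ≤ t) :
    absInnerSum P y + 2 * t ≤ absInnerSum P (y + t • v) := by
  set excess : E → ℝ := fun ν ↦ |⟪y + t • v, ν⟫| + |⟪y + t • v, reflectAlong v ν⟫| -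
    (|⟪y, ν⟫| + |⟪y, reflectAlong v ν⟫|)
  have h_sum : ∑ ν ∈ P, excess ν = 2 * (absInnerSum P (y + t • v) - absInnerSum P y) := by
    simp only [excess, absInnerSum, sum_sub_distrib, sum_add_distrib,
      sum_comp_reflectAlong hv hP fun ν ↦ |⟪y + t • v, ν⟫|,
      sum_comp_reflectAlong hv hP fun ν ↦ |⟪y, ν⟫|]
    ring
  have h_vv : ⟪v, v⟫ = 1 := by rw [real_inner_self_eq_norm_sq, hv, one_pow]
  have h_excess_v : excess v = 2 * t := by
    simp only [excess, reflectAlong_self hv, inner_neg_right, abs_neg, inner_add_left,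
      real_inner_smul_left, h_vv, mul_one, abs_of_nonneg hy, abs_of_nonneg (add_nonneg hy ht)]
    rw [abs_of_nonpos (by linarith)]
    ring
  have h_excess_neg_v : excess (-v) = 2 * t := by
    rw [← h_excess_v, ← reflectAlong_self hv]
    simp only [excess, reflectAlong_involutive hv v]
    ring
  have h_ne : v ≠ -v := fun h ↦ by
    have := congrArg (⟪·, v⟫) h
    norm_num [inner_neg_left, h_vv, hv] at this
  have h_le : excess v + excess (-v) ≤ ∑ ν ∈ P, excess ν :=
    add_le_sum (fun ν _ ↦ sub_nonneg.mpr (abs_inner_add_abs_inner_reflectAlong_le hv hy ht ν))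
      hvP (reflectAlong_self hv ▸ hP v hvP) h_ne
  linarith

lemma absInnerSum_add_smul_abs {v y : E} (hv : ‖v‖ = 1) (hP : ∀ p ∈ P, reflectAlong v p ∈ P)
    (hy : ⟪y, v⟫ = 0) (c : ℝ) : absInnerSum P (y + c • v) = absInnerSum P (y + |c| • v) := by
  rcases abs_cases c with ⟨hc, -⟩ | ⟨hc, -⟩
  · rw [hc]
  · rw [hc, ← reflectAlong_add_smul hv hy, absInnerSum_reflectAlong hv hP]

lemma absInnerSum_add_smul_lt {v y : E} (hv : ‖v‖ = 1) (hP : ∀ p ∈ P, reflectAlong v p ∈ P)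
    (hvP : v ∈ P) (hy : ⟪y, v⟫ = 0) {c d : ℝ} (hcd : |c| < |d|) :
    absInnerSum P (y + c • v) < absInnerSum P (y + d • v) := by
  have h_half_space : 0 ≤ ⟪y + |c| • v, v⟫ := by
    rw [inner_add_left, real_inner_smul_left, real_inner_self_eq_norm_sq, hv, hy]
    simp
  have h_grow := absInnerSum_add_two_mul_le hv hP hvP h_half_space (sub_nonneg.mpr hcd.le)
  rw [add_assoc, ← add_smul, add_sub_cancel] at h_grow
  rw [absInnerSum_add_smul_abs hv hP hy c, absInnerSum_add_smul_abs hv hP hy d]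
  linarith

theorem root_system_g_strict_decrease_general {N : ℕ}
    (P : Finset (EuclideanSpace ℝ (Fin N)))
    (hunit : ∀ ν ∈ P, ‖ν‖ = 1)
    (hrefl : ∀ ν ∈ P, ∀ p ∈ P, p - (2 * (inner ℝ p ν : ℝ)) • ν ∈ P)
    (g : EuclideanSpace ℝ (Fin N) → ℝ)
    (hg : ∀ x, g x = (1 / 2) * ∑ ν ∈ P, |(inner ℝ x ν : ℝ)|)
    (ν₀ : EuclideanSpace ℝ (Fin N)) (hν₀ : ν₀ ∈ P) (s : ℝ) (hs : 0 < s)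
    (Ψ : EuclideanSpace ℝ (Fin N) → EuclideanSpace ℝ (Fin N))
    (hΨ : ∀ x, Ψ x = x + (2 * (s - (inner ℝ x ν₀ : ℝ))) • ν₀) :
    ∀ x : EuclideanSpace ℝ (Fin N), s < (inner ℝ x ν₀ : ℝ) → g (Ψ x) < g x := by
  intro x hx
  have hν₀_unit := hunit ν₀ hν₀
  set a := ⟪x, ν₀⟫
  set y := x - a • ν₀
  have hy : ⟪y, ν₀⟫ = 0 := by
    rw [inner_sub_left, real_inner_smul_left, real_inner_self_eq_norm_sq, hν₀_unit]
    ring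
  have hx_eq : x = y + a • ν₀ := (sub_add_cancel x _).symm
  have hΨx : Ψ x = y + (2 * s - a) • ν₀ := by
    rw [hΨ]
    module
  have h_coeff : |2 * s - a| < |a| := by
    rw [abs_of_pos (hs.trans hx)]
    exact abs_lt.mpr ⟨by linarith, by linarith⟩
  calc g (Ψ x) = 1 / 2 * absInnerSum P (y + (2 * s - a) • ν₀) := by rw [hg, hΨx, absInnerSum]
    _ < 1 / 2 * absInnerSum P (y + a • ν₀) := by
      gcongr
      exact absInnerSum_add_smul_lt hν₀_unit (hrefl ν₀ hν₀) hν₀ hy h_coeff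
    _ = g x := by rw [hg, ← hx_eq, absInnerSum]

/-- for a finite root system P ⊆ S^{N−1}, g(x) = (1/2)Σ_{ν∈P}|x·ν|, ν₀ ∈ P,
s > 0 and the reflection Ψ(x) = x + 2(s − x·ν₀)ν₀ across {x·ν₀ = s},
one has g(Ψ(x)) < g(x) whenever x·ν₀ > s. -/
theorem root_system_g_strict_decrease {N : ℕ}
    (P : Finset (EuclideanSpace ℝ (Fin N)))
    (hunit : ∀ ν ∈ P, ‖ν‖ = 1)
    (hneg : ∀ ν ∈ P, -ν ∈ P)
    (hrefl : ∀ ν ∈ P, ∀ p ∈ P, p - (2 * (inner ℝ p ν : ℝ)) • ν ∈ P)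
    (g : EuclideanSpace ℝ (Fin N) → ℝ)
    (hg : ∀ x, g x = (1 / 2) * ∑ ν ∈ P, |(inner ℝ x ν : ℝ)|)
    (ν₀ : EuclideanSpace ℝ (Fin N)) (hν₀ : ν₀ ∈ P) (s : ℝ) (hs : 0 < s)
    (Ψ : EuclideanSpace ℝ (Fin N) → EuclideanSpace ℝ (Fin N))
    (hΨ : ∀ x, Ψ x = x + (2 * (s - (inner ℝ x ν₀ : ℝ))) • ν₀) :
    ∀ x : EuclideanSpace ℝ (Fin N), s < (inner ℝ x ν₀ : ℝ) → g (Ψ x) < g x :=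
  root_system_g_strict_decrease_general P hunit hrefl g hg ν₀ hν₀ s hs Ψ hΨ
end

section
/- (Two-dimensional cross-sections of root systems) Let P ⊆ S^{N−1} be a finite root system: for every p ∈ P, −p ∈ P and the reflection x ↦ x − 2(x·p)p maps P to itself. Let Π be a two-dimensional linear subspace of ℝ^N with P ∩ Π nonempty. Then there exists m ∈ ℕ, m ≥ 1, such that P ∩ Π equals, up to a rotation of Π, the set of 2m equally spaced unit vectors {(cos(πi/m), sin(πi/m)) : 1 ≤ i ≤ 2m}. -/
/-!
Identify `Pl` isometrically with `ℂ` so that a root goes to `1`. The cross-section becomes a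
finite set `B` of unit complex numbers containing `±1`, on which the reflection in the line
through `b` acts as `w ↦ -b² w̄`; composing two reflections shows `b² B = B`, so every `b²` lies in
the stabilizer `S` of `B`. As `S · 1 ⊆ B`, `S` is a finite subgroup of `ℂˣ`, i.e. the group `μₙ` of
`n`-th roots of unity, and `μₙ ⊆ B ⊆ μ₂ₙ`. Since `B` is a union of cosets of `μₙ`, either
`B = μₙ`, and then `n` is even because `-1 ∈ B`, or `B = μ₂ₙ`.
-/

open Real ComplexConjugate Pointwise MulAction
open scoped RealInnerProductSpace

lemma exists_linearIsometryEquiv_complex_apply_one {F : Type*} [NormedAddCommGroup F]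
    [InnerProductSpace ℝ F] (hF : Module.finrank ℝ F = 2) {x : F} (hx : ‖x‖ = 1) :
    ∃ ψ : ℂ ≃ₗᵢ[ℝ] F, ψ 1 = x := by
  have : FiniteDimensional ℝ F := Module.finite_of_finrank_eq_succ hF
  let φ := Complex.isometryOfOrthonormal ((stdOrthonormalBasis ℝ F).reindex (finCongr hF))
  let a : Circle := ⟨φ.symm x, mem_sphere_zero_iff_norm.2 (by rw [φ.symm.norm_map, hx])⟩
  refine ⟨(rotation a).trans φ, ?_⟩
  rw [LinearIsometryEquiv.trans_apply, rotation_apply, mul_one]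
  exact φ.apply_symm_apply x

lemma Complex.sub_two_inner_smul_eq {z : ℂ} (hz : ‖z‖ = 1) (w : ℂ) :
    w - (2 * ⟪w, z⟫) • z = -(z ^ 2 * conj w) := by
  have hzz : z * conj z = 1 := by
    rw [Complex.mul_conj, Complex.normSq_eq_norm_sq, hz]
    norm_num
  rw [Complex.inner, Complex.real_smul, Complex.ofReal_mul, Complex.re_eq_add_conj]
  push_cast
  simp only [map_mul, Complex.conj_conj]
  linear_combination (-w) * hzz

namespace LinearIsometry

variable {E : Type*} [NormedAddCommGroup E] [InnerProductSpace ℝ E] (ι : ℂ →ₗᵢ[ℝ] E)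

lemma map_complex_eq (z : ℂ) : ι z = z.re • ι 1 + z.im • ι Complex.I := by
  rw [← map_smul, ← map_smul, ← map_add, Complex.real_smul, Complex.real_smul, mul_one,
    Complex.re_add_im]

lemma map_exp_mul_I (θ : ℝ) :
    ι (Complex.exp (θ * Complex.I)) = cos θ • ι 1 + sin θ • ι Complex.I := by
  rw [ι.map_complex_eq, Complex.exp_ofReal_mul_I_re, Complex.exp_ofReal_mul_I_im]

lemma sub_two_inner_smul_eq {z : ℂ} (hz : ‖z‖ = 1) (w : ℂ) :
    ι w - (2 * ⟪ι w, ι z⟫) • ι z = ι (-(z ^ 2 * conj w)) := by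
  rw [ι.inner_map_map, ← Complex.sub_two_inner_smul_eq hz, map_sub, map_smul]

end LinearIsometry

lemma IsPrimitiveRoot.pow_eq_one_iff_exists_pow {R : Type*} [CommRing R] [IsDomain R]
    {ζ z : R} {n : ℕ} [NeZero n] (hζ : IsPrimitiveRoot ζ n) :
    z ^ n = 1 ↔ ∃ i, 1 ≤ i ∧ i ≤ n ∧ z = ζ ^ i := by
  constructor
  · intro hz
    obtain ⟨i, hi, rfl⟩ := hζ.eq_pow_of_pow_eq_one hz
    rcases Nat.eq_zero_or_pos i with rfl | hpos
    · exact ⟨n, NeZero.one_le, le_rfl, by rw [pow_zero, hζ.pow_eq_one]⟩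
    · exact ⟨i, hpos, hi.le, rfl⟩
  · rintro ⟨i, -, -, rfl⟩
    rw [← pow_mul, mul_comm, pow_mul, hζ.pow_eq_one, one_pow]

lemma Complex.pow_two_mul_eq_one_iff {m : ℕ} (hm : m ≠ 0) {z : ℂ} :
    z ^ (2 * m) = 1 ↔
      ∃ i : ℕ, 1 ≤ i ∧ i ≤ 2 * m ∧ z = Complex.exp ((π * i / m : ℝ) * Complex.I) := by
  have : NeZero (2 * m) := ⟨by omega⟩
  have hpow : ∀ i : ℕ, Complex.exp (2 * π * Complex.I / (2 * m : ℕ)) ^ i =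
      Complex.exp ((π * i / m : ℝ) * Complex.I) := by
    intro i
    rw [← Complex.exp_nat_mul]
    congr 1
    push_cast
    field_simp
  simp_rw [(Complex.isPrimitiveRoot_exp (2 * m) (NeZero.ne _)).pow_eq_one_iff_exists_pow, hpow]

lemma Subgroup.eq_rootsOfUnity_natCard {R : Type*} [CommRing R] [IsDomain R] (S : Subgroup Rˣ)
    [Finite S] : S = rootsOfUnity (Nat.card S) R := by
  have : NeZero (Nat.card S) := ⟨Nat.card_pos.ne'⟩
  refine Subgroup.eq_of_le_of_card_ge (fun s hs => ?_) (card_rootsOfUnity R _)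
  rw [mem_rootsOfUnity]
  exact congrArg Subtype.val (pow_card_eq_one' (x := (⟨s, hs⟩ : S)))

lemma eq_setOf_pow_eq_one_or_eq_setOf_pow_two_mul_eq_one {K : Type*} [Field K] {B : Set K}
    {n : ℕ} (h0 : 0 ∉ B) (h1 : 1 ∈ B) (hmul : ∀ w c, w ^ n = 1 → c ∈ B → w * c ∈ B)
    (hB : ∀ b ∈ B, b ^ (2 * n) = 1) :
    B = {z | z ^ n = 1} ∨ B = {z | z ^ (2 * n) = 1} := by
  have hroot : ∀ z : K, z ^ n = 1 → z ∈ B := fun z hz => by simpa using hmul z 1 hz h1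
  have hneg_one : ∀ z : K, z ^ (2 * n) = 1 → z ^ n ≠ 1 → z ^ n = -1 := fun z hz hzn =>
    (sq_eq_one_iff.1 (by rwa [← pow_mul, mul_comm])).resolve_left hzn
  by_cases hall : ∀ b ∈ B, b ^ n = 1
  · exact .inl (Set.ext fun z => ⟨hall z, hroot z⟩)
  push Not at hall
  obtain ⟨b, hb, hbn⟩ := hall
  refine .inr (Set.ext fun z => ⟨hB z, fun hz => ?_⟩)
  by_cases hzn : z ^ n = 1
  · exact hroot z hzn
  -- `z` and `b` both lie in the nontrivial coset of `μₙ` in `μ₂ₙ`.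
  have hquot : (z / b) ^ n = 1 := by
    rw [div_pow, hneg_one z hz hzn, hneg_one b (hB b hb) hbn, div_self (by norm_num)]
  simpa [show b ≠ 0 from fun h => h0 (h ▸ hb)] using hmul _ _ hquot hb

section Stabilizer

variable {B : Set ℂ}

lemma Complex.mul_mem_of_mem_stabilizer {u : ℂˣ} (hu : u ∈ stabilizer ℂˣ B) {c : ℂ}
    (hc : c ∈ B) : (u : ℂ) * c ∈ B := by
  rw [← mem_stabilizer_iff.1 hu]
  exact Set.smul_mem_smul_set hc

lemma Complex.finite_stabilizer (hB : B.Finite) (h1 : 1 ∈ B) : Finite (stabilizer ℂˣ B) := by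
  refine Set.Finite.to_subtype (Set.Finite.of_finite_image (f := Units.val) (hB.subset ?_)
    Units.val_injective.injOn)
  rintro _ ⟨u, hu, rfl⟩
  simpa using Complex.mul_mem_of_mem_stabilizer hu h1

lemma Complex.sq_mem_stabilizer (hB : B.Finite) (hsq : ∀ b ∈ B, ∀ c ∈ B, b ^ 2 * c ∈ B)
    {b : ℂ} (hb : b ∈ B) (hb0 : b ≠ 0) : Units.mk0 b hb0 ^ 2 ∈ stabilizer ℂˣ B := by
  rw [mem_stabilizer_iff]
  refine Set.eq_of_subset_of_ncard_le ?_ (Set.ncard_smul_set _ _).ge hB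
  rw [Set.smul_set_subset_iff]
  intro c hc
  simpa [Units.smul_def] using hsq b hb c hc

lemma Complex.exists_eq_setOf_pow_eq_one (hB : B.Finite) (h0 : 0 ∉ B) (h1 : 1 ∈ B)
    (hneg1 : -1 ∈ B) (hsq : ∀ b ∈ B, ∀ c ∈ B, b ^ 2 * c ∈ B) :
    ∃ m, 1 ≤ m ∧ B = {z | z ^ (2 * m) = 1} := by
  have := Complex.finite_stabilizer hB h1
  set n := Nat.card (stabilizer ℂˣ B)
  have hn : n ≠ 0 := Nat.card_pos.ne'
  have hS : stabilizer ℂˣ B = rootsOfUnity n ℂ := (stabilizer ℂˣ B).eq_rootsOfUnity_natCard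
  have hmul : ∀ w c : ℂ, w ^ n = 1 → c ∈ B → w * c ∈ B := by
    intro w c hw hc
    have hw0 : w ≠ 0 := by rintro rfl; simp [hn] at hw
    have hu : Units.mk0 w hw0 ∈ stabilizer ℂˣ B := by rwa [hS, mem_rootsOfUnity']
    exact Complex.mul_mem_of_mem_stabilizer hu hc
  have h2n : ∀ b ∈ B, b ^ (2 * n) = 1 := by
    intro b hb
    have hu := Complex.sq_mem_stabilizer hB hsq hb fun h => h0 (h ▸ hb)
    rw [hS, mem_rootsOfUnity'] at hu
    simpa [pow_mul] using hu
  rcases eq_setOf_pow_eq_one_or_eq_setOf_pow_two_mul_eq_one h0 h1 hmul h2n with hBn | hB2n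
  · obtain ⟨m, hm⟩ : Even n :=
      (neg_one_pow_eq_one_iff_even (by norm_num)).1 (hBn.subset hneg1)
    exact ⟨m, by omega, by rw [hBn, hm, two_mul]⟩
  · exact ⟨n, Nat.one_le_iff_ne_zero.2 hn, hB2n⟩

end Stabilizer

section RootSystem

variable {E : Type*} [NormedAddCommGroup E] [InnerProductSpace ℝ E] {P : Finset E}

lemma LinearIsometry.map_sq_mul_conj_mem (hneg : ∀ p ∈ P, -p ∈ P)
    (hrefl : ∀ p ∈ P, ∀ q ∈ P, q - (2 * ⟪q, p⟫) • p ∈ P) (ι : ℂ →ₗᵢ[ℝ] E) {b c : ℂ}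
    (hb : ‖b‖ = 1) (hbP : ι b ∈ P) (hcP : ι c ∈ P) : ι (b ^ 2 * conj c) ∈ P := by
  have h := hneg _ (hrefl _ hbP _ hcP)
  rwa [ι.sub_two_inner_smul_eq hb, ← map_neg, neg_neg] at h

lemma LinearIsometry.exists_preimage_eq_setOf_pow_eq_one (hunit : ∀ p ∈ P, ‖p‖ = 1)
    (hneg : ∀ p ∈ P, -p ∈ P) (hrefl : ∀ p ∈ P, ∀ q ∈ P, q - (2 * ⟪q, p⟫) • p ∈ P)
    (ι : ℂ →ₗᵢ[ℝ] E) (h1 : ι 1 ∈ P) :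
    ∃ m, 1 ≤ m ∧ ι ⁻¹' P = {z | z ^ (2 * m) = 1} := by
  have hnorm : ∀ b ∈ ι ⁻¹' P, ‖b‖ = 1 := fun b hb => ι.norm_map b ▸ hunit _ hb
  have hconj : ∀ c ∈ ι ⁻¹' P, conj c ∈ ι ⁻¹' P := fun c hc => by
    simpa using ι.map_sq_mul_conj_mem hneg hrefl (by simp) h1 hc
  refine Complex.exists_eq_setOf_pow_eq_one (P.finite_toSet.preimage ι.injective.injOn)
    (fun h0 => by simpa using hnorm 0 h0) h1 (by simpa using hneg _ h1) fun b hb c hc => ?_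
  simpa using ι.map_sq_mul_conj_mem hneg hrefl (hnorm b hb) hb (hconj c hc)

end RootSystem

/-- Two-dimensional cross-sections of root systems: if P ⊆ S^{N−1} is a finite
root system and Pl a two-dimensional linear subspace Pl with P ∩ Pl ≠ ∅, then, up to a rotation
(i.e. in a suitable orthonormal basis e, f of Pl), P ∩ Pl is the set of 2m equally spaced unit
vectors {(cos(πi/m), sin(πi/m)) : 1 ≤ i ≤ 2m} for some m ≥ 1. -/
theorem root_system_cross_section {N : ℕ}
    (P : Finset (EuclideanSpace ℝ (Fin N)))
    (hunit : ∀ p ∈ P, ‖p‖ = 1)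
    (hneg : ∀ p ∈ P, -p ∈ P)
    (hrefl : ∀ p ∈ P, ∀ q ∈ P, q - (2 * (inner ℝ q p : ℝ)) • p ∈ P)
    (Pl : Submodule ℝ (EuclideanSpace ℝ (Fin N)))
    (hdim : Module.finrank ℝ Pl = 2)
    (hne : ((P : Set (EuclideanSpace ℝ (Fin N))) ∩ (Pl : Set (EuclideanSpace ℝ (Fin N)))).Nonempty) :
    ∃ m : ℕ, 1 ≤ m ∧ ∃ e f : EuclideanSpace ℝ (Fin N),
      e ∈ Pl ∧ f ∈ Pl ∧ ‖e‖ = 1 ∧ ‖f‖ = 1 ∧ (inner ℝ e f : ℝ) = 0 ∧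
      (P : Set (EuclideanSpace ℝ (Fin N))) ∩ (Pl : Set (EuclideanSpace ℝ (Fin N))) =
        {x | ∃ i : ℕ, 1 ≤ i ∧ i ≤ 2 * m ∧
          x = Real.cos (π * i / m) • e + Real.sin (π * i / m) • f} := by
  obtain ⟨p, hpP, hpPl⟩ := hne
  obtain ⟨ψ, hψ⟩ := exists_linearIsometryEquiv_complex_apply_one hdim (x := ⟨p, hpPl⟩)
    (hunit p hpP)
  let ι := Pl.subtypeₗᵢ.comp ψ.toLinearIsometry
  have hrange : Set.range ι = Pl := by
    simp [ι, LinearIsometry.coe_comp, Set.range_comp, ψ.surjective.range_eq]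
  obtain ⟨m, hm, hpre⟩ := ι.exists_preimage_eq_setOf_pow_eq_one hunit hneg hrefl
    (by simpa [ι, hψ] using hpP)
  refine ⟨m, hm, ι 1, ι Complex.I, (ψ 1).2, (ψ Complex.I).2, by simp, by simp,
    by rw [ι.inner_map_map]; simp, ?_⟩
  rw [← hrange, ← Set.image_preimage_eq_inter_range, hpre]
  ext x
  simp only [Set.mem_image, Set.mem_ofPred_eq, Complex.pow_two_mul_eq_one_iff (by omega : m ≠ 0)]
  constructor
  · rintro ⟨_, ⟨i, hi1, hi2, rfl⟩, rfl⟩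
    exact ⟨i, hi1, hi2, ι.map_exp_mul_I _⟩
  · rintro ⟨i, hi1, hi2, rfl⟩
    exact ⟨_, ⟨i, hi1, hi2, rfl⟩, ι.map_exp_mul_I _⟩
end

section
/- (Hölder-in-time bound from per-step L¹ estimates) Suppose sets (E_k)_{k≥0} in ℝ^N satisfy: for all k ≥ 1 and all 0 < ℓ ≤ c√h, |E_k Δ E_{k−1}| ≤ C(ℓ·P₀ + ℓ^{−1}·d_k), where d_k ≥ 0 with Σ_{k=1}^∞ d_k ≤ h·P₀, and c, C, P₀, h > 0. Then for all integers 0 ≤ i ≤ j with (j−i)h ≥ h, |E_j Δ E_i| ≤ C'·P₀·((j−i)h)^{1/2} for a constant C' depending only on c and C. -/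
/-!
Summing the per-step estimate over the `n = j - i` steps between `E i` and `E j`, with one
common scale `ℓ`, bounds `|E_j Δ E_i|` by `C (n ℓ P₀ + ℓ⁻¹ h P₀)`. With `t = n h`, the choice
`ℓ = c h / √t` is admissible because `t ≥ h`, and it makes both terms of order `P₀ √t`:
`n ℓ = c √t` and `ℓ⁻¹ h = √t / c`.
-/

open MeasureTheory

lemma measure_symmDiff_le_sum_Ico {α : Type*} [MeasurableSpace α] (μ : Measure α)
    (E : ℕ → Set α) {i j : ℕ} (hij : i ≤ j) :
    μ (symmDiff (E j) (E i)) ≤ ∑ k ∈ Finset.Ico i j, μ (symmDiff (E (k + 1)) (E k)) := by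
  induction j, hij using Nat.le_induction with
  | base => simp
  | succ j hij ih =>
    rw [Finset.sum_Ico_succ_top hij]
    exact (measure_symmDiff_le _ (E j) _).trans (by rw [add_comm]; gcongr)

lemma mul_div_sqrt_le_mul_sqrt {c h t : ℝ} (hc : 0 ≤ c) (hh : 0 < h) (hht : h ≤ t) :
    c * h / √t ≤ c * √h := by
  calc c * h / √t ≤ c * h / √h := by gcongr
    _ = c * √h := by rw [mul_div_assoc, Real.div_sqrt]

lemma sum_mul_add_inv_mul_le {ι : Type*} (s : Finset ι) (d : ι → ℝ) {c C h P t : ℝ}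
    (hc : 0 < c) (hC : 0 ≤ C) (ht : 0 < t) (hst : (s.card : ℝ) * h = t)
    (hd : ∑ k ∈ s, d k ≤ h * P) :
    ∑ k ∈ s, C * (c * h / √t * P + (c * h / √t)⁻¹ * d k) ≤ C * (c + c⁻¹) * P * √t := by
  have hh : 0 < h := pos_of_mul_pos_right (hst ▸ ht) (Nat.cast_nonneg _)
  have hsqrt : √t ^ 2 = t := Real.sq_sqrt ht.le
  have balance : (s.card : ℝ) * (c * h / √t * P) + (c * h / √t)⁻¹ * (h * P)
      = (c + c⁻¹) * P * √t := by
    field_simp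
    linear_combination P * c ^ 2 * hst - P * c ^ 2 * hsqrt
  calc ∑ k ∈ s, C * (c * h / √t * P + (c * h / √t)⁻¹ * d k)
      = C * ((s.card : ℝ) * (c * h / √t * P) + (c * h / √t)⁻¹ * ∑ k ∈ s, d k) := by
        rw [← Finset.mul_sum, Finset.sum_add_distrib, Finset.sum_const, nsmul_eq_mul,
          Finset.mul_sum]
    _ ≤ C * ((s.card : ℝ) * (c * h / √t * P) + (c * h / √t)⁻¹ * (h * P)) := by
        gcongr
    _ = C * (c + c⁻¹) * P * √t := by rw [balance, mul_assoc, mul_assoc, mul_assoc]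

/-- Hölder-in-time bound from per-step L¹ estimates: if for each step
|E_k Δ E_{k−1}| ≤ C(ℓ·P₀ + ℓ⁻¹·d_k) for all 0 < ℓ ≤ c√h, with Σ d_k ≤ h·P₀, then
|E_j Δ E_i| ≤ C'·P₀·((j−i)h)^{1/2} whenever (j−i)h ≥ h, with C' depending only on c, C. -/
theorem holder_in_time (c C : ℝ) (hc : 0 < c) (hC : 0 < C) :
    ∃ C' : ℝ, 0 < C' ∧
      ∀ (N : ℕ) (h P₀ : ℝ), 0 < h → 0 < P₀ →
      ∀ (E : ℕ → Set (EuclideanSpace ℝ (Fin N))) (d : ℕ → ℝ),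
        (∀ k, 0 ≤ d k) → Summable d → (∑' k : ℕ, d (k + 1)) ≤ h * P₀ →
        (∀ k, 1 ≤ k → ∀ ℓ : ℝ, 0 < ℓ → ℓ ≤ c * Real.sqrt h →
          volume (symmDiff (E k) (E (k - 1))) ≤ ENNReal.ofReal (C * (ℓ * P₀ + ℓ⁻¹ * d k))) →
        ∀ i j : ℕ, i ≤ j → h ≤ ((j : ℝ) - i) * h →
          volume (symmDiff (E j) (E i)) ≤
            ENNReal.ofReal (C' * P₀ * Real.sqrt (((j : ℝ) - i) * h)) := by
  refine ⟨C * (c + c⁻¹), by positivity,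
    fun N h P₀ hh hP₀ E d hd hsum htsum hstep i j hij hjh => ?_⟩
  set t := ((j : ℝ) - i) * h
  have ht : 0 < t := hh.trans_le hjh
  set ℓ := c * h / √t
  have hstep' (k : ℕ) :
      volume (symmDiff (E (k + 1)) (E k)) ≤ ENNReal.ofReal (C * (ℓ * P₀ + ℓ⁻¹ * d (k + 1))) := by
    simpa using hstep (k + 1) k.succ_pos ℓ (by positivity)
      (mul_div_sqrt_le_mul_sqrt hc.le hh hjh)
  have hcard : ((Finset.Ico i j).card : ℝ) * h = t := by rw [Nat.card_Ico, Nat.cast_sub hij]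
  have hd_window : ∑ k ∈ Finset.Ico i j, d (k + 1) ≤ h * P₀ :=
    (((summable_nat_add_iff 1).mpr hsum).sum_le_tsum _ fun k _ => hd _).trans htsum
  calc volume (symmDiff (E j) (E i))
      ≤ ∑ k ∈ Finset.Ico i j, volume (symmDiff (E (k + 1)) (E k)) :=
        measure_symmDiff_le_sum_Ico volume E hij
    _ ≤ ∑ k ∈ Finset.Ico i j, ENNReal.ofReal (C * (ℓ * P₀ + ℓ⁻¹ * d (k + 1))) :=
        Finset.sum_le_sum fun k _ => hstep' k
    _ = ENNReal.ofReal (∑ k ∈ Finset.Ico i j, C * (ℓ * P₀ + ℓ⁻¹ * d (k + 1))) :=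
        (ENNReal.ofReal_sum_of_nonneg fun k _ => by have := hd (k + 1); positivity).symm
    _ ≤ ENNReal.ofReal (C * (c + c⁻¹) * P₀ * √t) := ENNReal.ofReal_le_ofReal <|
        sum_mul_add_inv_mul_le _ _ hc hC.le ht hcard hd_window
end
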